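/- Let X be a completely metrizable topological space without isolated points, T : X → X continuous and topologically transitive, and A a countable subset of X. Then there exists a dense G_δ subset D of X such that every z ∈ D is recurrent and the closure of A is contained in L(z) for every z ∈ D. -/

import Mathlib

open Filter Topology Set Metric

/-- The limit set `L(x)`: limits of subsequences `T^[kₙ] x` along a strictly
increasing sequence of positive integers. -/
def limitSet {X : Type*} [TopologicalSpace X] (T : X → X) (x : X) : Set X :=
  {y | ∃ k : ℕ → ℕ, StrictMono k ∧ (∀ n, 0 < k n) ∧
    Tendsto (fun n => T^[k n] x) atTop (𝓝 y)}

/-- The extended (prolongational) limit set `J(x)`. -/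
def extLimitSet {X : Type*} [TopologicalSpace X] (T : X → X) (x : X) : Set X :=
  {y | ∃ k : ℕ → ℕ, StrictMono k ∧ (∀ n, 0 < k n) ∧
    ∃ u : ℕ → X, Tendsto u atTop (𝓝 x) ∧
      Tendsto (fun n => T^[k n] (u n)) atTop (𝓝 y)}

/-- Topological transitivity. -/
def TopTransitive {X : Type*} [TopologicalSpace X] (T : X → X) : Prop :=
  ∀ U V : Set X, IsOpen U → IsOpen V → U.Nonempty → V.Nonempty →
    ∃ n : ℕ, (T^[n] '' U ∩ V).Nonempty

/-! By the Baire category theorem it suffices that, for every continuous `g : X → X` (here `id`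
and the constants `a ∈ A`), the points `z` for which `g z` is a cluster point of the orbit of `z`
form a residual set. That set is `⋂ m N, ⋃ n ≥ N, {z | dist (T^[n] z) (g z) < 1 / (m + 1)}`, and
these open sets are dense because, in the absence of isolated points, transitivity yields
`T^[n] '' U ∩ V ≠ ∅` for arbitrarily large `n`: applied to two disjoint open subsets of `W`,
transitivity gives a return of `W` to itself at a time `n > 0`, and nesting such returns gives
open subsets of `V` mapped into `V` by arbitrarily large iterates.
Cluster points of a sequence form a closed set and, in a metric space, are limits of
subsequences, which gives `closure A ⊆ L(z)`. -/

namespace TopTransitive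

variable {X : Type*} [TopologicalSpace X] {T : X → X}

theorem exists_pos_image_inter_self [T2Space X] (hiso : ∀ x : X, (𝓝[≠] x).NeBot)
    (htrans : TopTransitive T) {W : Set X} (hW : IsOpen W) (hWne : W.Nonempty) :
    ∃ n, 0 < n ∧ (T^[n] '' W ∩ W).Nonempty := by
  obtain ⟨x, hx⟩ := hWne
  obtain ⟨y, hyW, hyx⟩ :=
    (hiso x).nonempty_of_mem (sdiff_mem_nhdsWithin_compl (hW.mem_nhds hx) {x})
  obtain ⟨u, v, hu, hv, hxu, hyv, huv⟩ := t2_separation (Ne.symm hyx)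
  obtain ⟨n, w, ⟨z, hz, rfl⟩, hwv⟩ :=
    htrans (W ∩ u) (W ∩ v) (hW.inter hu) (hW.inter hv) ⟨x, hx, hxu⟩ ⟨y, hyW, hyv⟩
  refine ⟨n, Nat.pos_of_ne_zero ?_, T^[n] z, mem_image_of_mem _ hz.1, hwv.1⟩
  rintro rfl
  exact huv.ne_of_mem hz.2 hwv.2 rfl

theorem exists_mapsTo_iterate [T2Space X] (hiso : ∀ x : X, (𝓝[≠] x).NeBot) (hT : Continuous T)
    (htrans : TopTransitive T) (N : ℕ) {V : Set X} (hV : IsOpen V) (hVne : V.Nonempty) :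
    ∃ W ⊆ V, IsOpen W ∧ W.Nonempty ∧ ∃ M ≥ N, MapsTo T^[M] W V := by
  induction N with
  | zero => exact ⟨V, subset_rfl, hV, hVne, 0, le_rfl, mapsTo_id V⟩
  | succ N ih =>
    obtain ⟨W, hWV, hW, hWne, M, hMN, hMW⟩ := ih
    obtain ⟨n, hn, w, ⟨z, hz, rfl⟩, hzW⟩ := exists_pos_image_inter_self hiso htrans hW hWne
    refine ⟨W ∩ T^[n] ⁻¹' W, inter_subset_left.trans hWV, hW.inter (hW.preimage (hT.iterate n)),
      ⟨z, hz, hzW⟩, M + n, by omega, fun x hx => ?_⟩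
    rw [Function.iterate_add_apply]
    exact hMW hx.2

theorem frequently_image_inter_nonempty [T2Space X] (hiso : ∀ x : X, (𝓝[≠] x).NeBot)
    (hT : Continuous T) (htrans : TopTransitive T) (U V : Set X) (hU : IsOpen U) (hV : IsOpen V)
    (hUne : U.Nonempty) (hVne : V.Nonempty) : ∃ᶠ n in atTop, (T^[n] '' U ∩ V).Nonempty := by
  refine frequently_atTop.2 fun N => ?_
  obtain ⟨W, hWV, hW, hWne, M, hMN, hMW⟩ := htrans.exists_mapsTo_iterate hiso hT N hV hVne
  obtain ⟨p, w, ⟨z, hz, rfl⟩, hwW⟩ := htrans U W hU hW hUne hWne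
  refine ⟨M + p, by omega, T^[M + p] z, mem_image_of_mem _ hz, ?_⟩
  rw [Function.iterate_add_apply]
  exact hMW hwW

end TopTransitive

theorem mem_limitSet_of_mapClusterPt {X : Type*} [TopologicalSpace X]
    [FirstCountableTopology X] {T : X → X} {x y : X}
    (h : MapClusterPt y atTop fun n => T^[n] x) : y ∈ limitSet T x := by
  obtain ⟨ψ, hψ, hlim⟩ := h.tendsto_subseq
  exact ⟨fun n => ψ (n + 1), hψ.comp (strictMono_id.add_const 1),
    fun n => (Nat.zero_le _).trans_lt (hψ n.succ_pos), hlim.comp (tendsto_add_atTop_nat 1)⟩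

theorem setOf_mapClusterPt_iterate_mem_residual {X : Type*} [MetricSpace X] {T : X → X}
    (hT : Continuous T)
    (hfreq : ∀ U V : Set X, IsOpen U → IsOpen V → U.Nonempty → V.Nonempty →
      ∃ᶠ n in atTop, (T^[n] '' U ∩ V).Nonempty)
    {g : X → X} (hg : Continuous g) :
    {z | MapClusterPt (g z) atTop fun n => T^[n] z} ∈ residual X := by
  let O : ℕ → ℕ → Set X := fun m N => ⋃ n ≥ N, {z | dist (T^[n] z) (g z) < 1 / (m + 1)}
  have hO_open : ∀ m N, IsOpen (O m N) := fun m N =>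
    isOpen_biUnion fun n _ => isOpen_lt ((hT.iterate n).dist hg) continuous_const
  have hO_dense : ∀ m N, Dense (O m N) := by
    intro m N
    refine dense_iff_inter_open.2 fun U hU ⟨x, hx⟩ => ?_
    set ε : ℝ := 1 / (m + 1)
    have hε : 0 < ε / 2 := by positivity
    have hU' : IsOpen (U ∩ g ⁻¹' ball (g x) (ε / 2)) := hU.inter (isOpen_ball.preimage hg)
    obtain ⟨n, hn, _, ⟨z, ⟨hzU, hgz⟩, rfl⟩, hTz⟩ := (frequently_atTop.1 (hfreq _ _ hU'
      isOpen_ball ⟨x, hx, mem_ball_self hε⟩ ⟨g x, mem_ball_self hε⟩)) N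
    refine ⟨z, hzU, mem_biUnion hn ?_⟩
    calc dist (T^[n] z) (g z) ≤ dist (T^[n] z) (g x) + dist (g z) (g x) :=
          dist_triangle_right _ _ _
      _ < ε / 2 + ε / 2 := add_lt_add hTz hgz
      _ = ε := add_halves ε
  filter_upwards [countable_iInter_mem.2 fun m => countable_iInter_mem.2 fun N =>
    residual_of_dense_open (hO_open m N) (hO_dense m N)] with z hz
  refine nhds_basis_ball_inv_nat_succ.mapClusterPt_iff_frequently.2 fun m _ => ?_
  refine frequently_atTop.2 fun N => ?_
  simpa [O] using mem_iInter₂.1 hz m N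

theorem stmt5 {X : Type*} [MetricSpace X] [CompleteSpace X]
    (hiso : ∀ x : X, (𝓝[≠] x).NeBot)
    (T : X → X) (hT : Continuous T) (htrans : TopTransitive T)
    (A : Set X) (hA : A.Countable) :
    ∃ D : Set X, Dense D ∧ IsGδ D ∧
      ∀ z ∈ D, z ∈ limitSet T z ∧ closure A ⊆ limitSet T z := by
  have hfreq := htrans.frequently_image_inter_nonempty hiso hT
  have hrec := setOf_mapClusterPt_iterate_mem_residual hT hfreq continuous_id
  have hvisit : ⋂ a ∈ A, {z | MapClusterPt a atTop fun n => T^[n] z} ∈ residual X :=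
    (countable_bInter_mem hA).2 fun a _ =>
      setOf_mapClusterPt_iterate_mem_residual hT hfreq continuous_const
  obtain ⟨D, hDsub, hDGδ, hDdense⟩ := mem_residual.1 (inter_mem hrec hvisit)
  refine ⟨D, hDdense, hDGδ, fun z hz => ⟨mem_limitSet_of_mapClusterPt (hDsub hz).1, ?_⟩⟩
  have hA_sub : A ⊆ {y | MapClusterPt y atTop fun n => T^[n] z} := fun a ha =>
    mem_iInter₂.1 (hDsub hz).2 a ha
  have hclosure := closure_minimal hA_sub isClosed_setOfPred_clusterPt
  exact fun y hy => mem_limitSet_of_mapClusterPt (hclosure hy)
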